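/- arXiv:2305.00880 — 3 statements merged into one kernel-verified Lean document; each statement's English description precedes it below -/
import Mathlib

section
/- If p ≤ (1−ε)n/(eM) where ε > 0 is constant and M = Ω(n log n), then with high probability as n → ∞ the random graph G(n,p) contains no Hamilton cycle H with ι(H) ≤ M. -/
/-!
A permutation is determined by its Lehmer code `c i = #{j > i | σ j < σ i}`, whose entries sum
to the number of inversions; so at most `C(M + n, n) ≤ (e (M + n) / n) ^ n` permutations have at
most `M` inversions. Each of them is a Hamilton cycle of `G(n, p)` with probability `p ^ n`, and
with `p ≤ (1 - ε) n / (e M)` the union bound gives at most `((1 - ε) (1 + n / M)) ^ n`, which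
tends to `0` because `n / M = O(1 / log n)`.
-/

open Filter Topology

attribute [local instance] Classical.propDecidable

/-- Weight of an outcome `ω` (an indicator of which potential edges are present)
in the Erdős–Rényi model `G(n,p)`: each non-diagonal pair is present
independently with probability `p`; diagonal "edges" are forced absent. -/
noncomputable def erWeight (n : ℕ) (p : ℝ) (ω : Sym2 (Fin n) → Bool) : ℝ :=
  ∏ e : Sym2 (Fin n),
    if e.IsDiag then (if ω e then 0 else 1) else (if ω e then p else 1 - p)

/-- The simple graph determined by an edge-indicator `ω`. -/
def graphOf {n : ℕ} (ω : Sym2 (Fin n) → Bool) : SimpleGraph (Fin n) :=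
  SimpleGraph.fromRel (fun u v => ω s(u, v))

/-- Probability that `G(n,p)` satisfies the property `A`. -/
noncomputable def erP (n : ℕ) (p : ℝ) (A : SimpleGraph (Fin n) → Prop) : ℝ :=
  ∑ ω : Sym2 (Fin n) → Bool, erWeight n p ω * (if A (graphOf ω) then 1 else 0)

/-- `σ` lists the vertices of a Hamilton cycle of `G` in order
(consecutive vertices, cyclically, are adjacent). -/
def IsHamSeq {n : ℕ} (G : SimpleGraph (Fin n)) (σ : Equiv.Perm (Fin n)) : Prop :=
  ∀ i : Fin n, G.Adj (σ i) (σ (finRotate n i))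

/-- Number of inversions of the sequence `(σ 0, ..., σ (n-1))`. -/
def inversions {n : ℕ} (σ : Equiv.Perm (Fin n)) : ℕ :=
  (Finset.univ.filter (fun q : Fin n × Fin n => q.1 < q.2 ∧ σ q.2 < σ q.1)).card

open Finset Real

section LehmerCode

variable {n : ℕ}

def lehmerCode (σ : Equiv.Perm (Fin n)) (i : Fin n) : ℕ :=
  #{j | i < j ∧ σ j < σ i}

lemma sum_lehmerCode (σ : Equiv.Perm (Fin n)) : ∑ i, lehmerCode σ i = inversions σ := by
  simp only [inversions, lehmerCode, card_filter, Fintype.sum_prod_type]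

lemma lehmerCode_eq_card_sdiff (σ : Equiv.Perm (Fin n)) (i : Fin n) :
    lehmerCode σ i = #(Iio (σ i) \ (Iio i).image σ) := by
  rw [lehmerCode, ← card_image_of_injective _ σ.injective]
  congr 1
  ext v
  obtain ⟨j, rfl⟩ := σ.surjective v
  simp only [mem_image, mem_filter, mem_univ, true_and, σ.injective.eq_iff, exists_eq_right,
    Finset.mem_sdiff, mem_Iio, not_lt]
  exact ⟨fun ⟨hij, hσ⟩ => ⟨hσ, hij.le⟩,
    fun ⟨hσ, hij⟩ => ⟨hij.lt_of_ne (ne_of_apply_ne σ hσ.ne'), hσ⟩⟩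

lemma strictMonoOn_card_Iio_sdiff {α : Type*} [LinearOrder α] [LocallyFiniteOrderBot α]
    [DecidableEq α] (A : Finset α) : StrictMonoOn (fun x => #(Iio x \ A)) (↑A)ᶜ := by
  intro x hx y _ hxy
  refine card_lt_card ⟨sdiff_subset_sdiff (Iio_subset_Iio hxy.le) le_rfl, fun h => ?_⟩
  simpa using h (mem_sdiff.2 ⟨mem_Iio.2 hxy, hx⟩)

-- `σ i` is the unique value outside `σ '' Iio i` with `lehmerCode σ i` such values below it.
lemma lehmerCode_injective : Function.Injective (lehmerCode (n := n)) := by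
  intro σ τ h
  refine Equiv.ext fun i => ?_
  induction i using WellFoundedLT.induction with
  | _ i ih =>
  have hA : (Iio i).image σ = (Iio i).image τ := image_congr fun j hj => ih j (mem_Iio.1 hj)
  have hσ : σ i ∉ (Iio i).image σ := by simp [σ.injective.eq_iff]
  have hτ : τ i ∉ (Iio i).image σ := by simp [hA, τ.injective.eq_iff]
  refine (strictMonoOn_card_Iio_sdiff _).injOn hσ hτ ?_
  simpa only [lehmerCode_eq_card_sdiff, hA] using congrFun h i

lemma card_le_choose_of_sum_le {m : ℕ} (s : Finset (Fin n → ℕ)) (hs : ∀ f ∈ s, ∑ i, f i ≤ m) :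
    #s ≤ (m + n).choose n := by
  have hSym : Fintype.card (Sym (Fin (n + 1)) m) = (m + n).choose n := by
    rw [Sym.card_sym_eq_choose, Fintype.card_fin, show n + 1 + m - 1 = m + n by omega,
      Nat.choose_symm_add]
  rw [← hSym, ← card_univ]
  refine card_le_card_of_surjOn
    (fun P => Fin.init (Sym.equivNatSumOfFintype _ _ P : Fin (n + 1) → ℕ)) ?_
  intro f hf
  have hsum : ∑ i, (Fin.snoc f (m - ∑ i, f i) : Fin (n + 1) → ℕ) i = m := by
    simp [Fin.sum_univ_castSucc, hs f hf]
  exact ⟨(Sym.equivNatSumOfFintype _ _).symm ⟨_, hsum⟩, mem_coe.2 (mem_univ _), by simp⟩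

lemma card_filter_inversions_le (m : ℕ) :
    #{σ : Equiv.Perm (Fin n) | inversions σ ≤ m} ≤ (m + n).choose n := by
  rw [← card_image_of_injective _ lehmerCode_injective]
  refine card_le_choose_of_sum_le _ fun f hf => ?_
  obtain ⟨σ, hσ, rfl⟩ := mem_image.1 hf
  rw [sum_lehmerCode]
  exact (mem_filter.1 hσ).2

end LehmerCode

section ErdosRenyi

variable {n : ℕ} {p : ℝ}

lemma erWeight_nonneg (hp0 : 0 ≤ p) (hp1 : p ≤ 1) (ω : Sym2 (Fin n) → Bool) :
    0 ≤ erWeight n p ω :=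
  prod_nonneg fun e _ => by split_ifs <;> linarith

lemma erP_nonneg (hp0 : 0 ≤ p) (hp1 : p ≤ 1) (A : SimpleGraph (Fin n) → Prop) :
    0 ≤ erP n p A :=
  sum_nonneg fun ω _ => mul_nonneg (erWeight_nonneg hp0 hp1 ω) (by split_ifs <;> norm_num)

lemma erP_mono (hp0 : 0 ≤ p) (hp1 : p ≤ 1) {A B : SimpleGraph (Fin n) → Prop}
    (h : ∀ G, A G → B G) : erP n p A ≤ erP n p B :=
  sum_le_sum fun ω _ => mul_le_mul_of_nonneg_left (by split_ifs <;> simp_all)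
    (erWeight_nonneg hp0 hp1 ω)

lemma erP_exists_le_sum (hp0 : 0 ≤ p) (hp1 : p ≤ 1) {ι : Type*} (s : Finset ι)
    (A : ι → SimpleGraph (Fin n) → Prop) :
    erP n p (fun G => ∃ i ∈ s, A i G) ≤ ∑ i ∈ s, erP n p (A i) := by
  simp only [erP]
  rw [sum_comm]
  refine sum_le_sum fun ω _ => ?_
  rw [← mul_sum]
  refine mul_le_mul_of_nonneg_left ?_ (erWeight_nonneg hp0 hp1 ω)
  split_ifs with h
  · obtain ⟨i, hi, hA⟩ := h
    calc (1 : ℝ) = if A i (graphOf ω) then 1 else 0 := (if_pos hA).symm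
      _ ≤ _ := single_le_sum (f := fun i => if A i (graphOf ω) then (1 : ℝ) else 0)
          (fun _ _ => by split_ifs <;> norm_num) hi
  · exact sum_nonneg fun _ _ => by split_ifs <;> norm_num

lemma mem_edgeSet_graphOf (ω : Sym2 (Fin n) → Bool) (e : Sym2 (Fin n)) :
    e ∈ (graphOf ω).edgeSet ↔ ¬ e.IsDiag ∧ ω e = true := by
  induction e using Sym2.ind with
  | _ u v => simp [graphOf, Sym2.eq_swap]

lemma erP_forall_mem_edgeSet (E : Finset (Sym2 (Fin n))) (hE : ∀ e ∈ E, ¬ e.IsDiag) :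
    erP n p (fun G => ∀ e ∈ E, e ∈ G.edgeSet) = p ^ #E := by
  let g : Sym2 (Fin n) → Bool → ℝ := fun e b =>
    (if e.IsDiag then (if b then 0 else 1) else (if b then p else 1 - p)) *
      (if e ∈ E → b = true then 1 else 0)
  calc erP n p _ = ∑ ω : Sym2 (Fin n) → Bool, ∏ e, g e (ω e) := by
        refine sum_congr rfl fun ω _ => ?_
        have hω : (∀ e ∈ E, e ∈ (graphOf ω).edgeSet) ↔ ∀ e, e ∈ E → ω e = true := by
          simp +contextual [mem_edgeSet_graphOf, hE]
        simp only [erWeight, g, prod_mul_distrib, Fintype.prod_boole, hω]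
    _ = ∏ e, ∑ b, g e b := (Fintype.prod_sum g).symm
    _ = ∏ e, if e ∈ E then p else 1 := by
        refine prod_congr rfl fun e _ => ?_
        by_cases he : e ∈ E
        · simp [g, he, hE e he]
        · by_cases hd : e.IsDiag <;> simp [g, he, hd]
    _ = p ^ #E := by rw [prod_ite_mem, univ_inter, prod_const]

end ErdosRenyi

section HamiltonCycle

variable {n : ℕ}

def cycleEdges (σ : Equiv.Perm (Fin n)) : Finset (Sym2 (Fin n)) :=
  univ.image fun i => s(σ i, σ (finRotate n i))

lemma not_isDiag_of_mem_cycleEdges (hn : 2 ≤ n) {σ : Equiv.Perm (Fin n)} {e : Sym2 (Fin n)}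
    (he : e ∈ cycleEdges σ) : ¬ e.IsDiag := by
  obtain ⟨i, -, rfl⟩ := mem_image.1 he
  have hi : finRotate n i ≠ i := Equiv.Perm.mem_support.1 (by simp [support_finRotate_of_le hn])
  simpa [σ.injective.eq_iff] using hi.symm

lemma card_cycleEdges (hn : 3 ≤ n) (σ : Equiv.Perm (Fin n)) : #(cycleEdges σ) = n := by
  obtain ⟨m, rfl⟩ : ∃ m, n = m + 3 := ⟨n - 3, by omega⟩
  rw [cycleEdges, card_image_of_injective, card_univ, Fintype.card_fin]
  intro i j h
  simp only [finRotate_apply, Sym2.eq_iff, σ.injective.eq_iff] at h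
  rcases h with ⟨h, -⟩ | ⟨rfl, h⟩
  · exact h
  · rw [add_assoc, add_eq_left, Fin.ext_iff, Fin.val_add, Fin.val_one] at h
    simp [Nat.mod_eq_of_lt (show 2 < m + 3 by omega)] at h

lemma IsHamSeq.forall_mem_edgeSet {G : SimpleGraph (Fin n)} {σ : Equiv.Perm (Fin n)}
    (h : IsHamSeq G σ) : ∀ e ∈ cycleEdges σ, e ∈ G.edgeSet := by
  simpa [cycleEdges, IsHamSeq] using h

variable {p : ℝ}

lemma erP_isHamSeq_le (hn : 3 ≤ n) (hp0 : 0 ≤ p) (hp1 : p ≤ 1) (σ : Equiv.Perm (Fin n)) :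
    erP n p (fun G => IsHamSeq G σ) ≤ p ^ n :=
  calc erP n p (fun G => IsHamSeq G σ)
      ≤ erP n p (fun G => ∀ e ∈ cycleEdges σ, e ∈ G.edgeSet) :=
        erP_mono hp0 hp1 fun _ h => h.forall_mem_edgeSet
    _ = p ^ n := by
        rw [erP_forall_mem_edgeSet _ fun _ => not_isDiag_of_mem_cycleEdges (by omega),
          card_cycleEdges hn]

lemma erP_exists_isHamSeq_inversions_le (hn : 3 ≤ n) (hp0 : 0 ≤ p) (hp1 : p ≤ 1) (m : ℕ) :
    erP n p (fun G => ∃ σ, IsHamSeq G σ ∧ inversions σ ≤ m) ≤ (m + n).choose n * p ^ n := by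
  set S : Finset (Equiv.Perm (Fin n)) := {σ | inversions σ ≤ m}
  calc erP n p (fun G => ∃ σ, IsHamSeq G σ ∧ inversions σ ≤ m)
      ≤ erP n p (fun G => ∃ σ ∈ S, IsHamSeq G σ) :=
        erP_mono hp0 hp1 fun _ ⟨σ, h, hσ⟩ => ⟨σ, by simpa [S] using hσ, h⟩
    _ ≤ ∑ σ ∈ S, erP n p (fun G => IsHamSeq G σ) := erP_exists_le_sum hp0 hp1 S _
    _ ≤ ∑ σ ∈ S, p ^ n := sum_le_sum fun σ _ => erP_isHamSeq_le hn hp0 hp1 σ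
    _ = #S * p ^ n := by rw [sum_const, nsmul_eq_mul]
    _ ≤ (m + n).choose n * p ^ n := by
        gcongr
        exact_mod_cast card_filter_inversions_le m

end HamiltonCycle

lemma choose_le_exp_mul_div_pow (N k : ℕ) : (N.choose k : ℝ) ≤ (exp 1 * N / k) ^ k := by
  rcases k.eq_zero_or_pos with rfl | hk
  · simp
  have hk' : (k : ℝ) ^ k / k.factorial ≤ exp 1 ^ k := by
    rw [exp_one_pow]
    exact pow_div_factorial_le_exp _ k.cast_nonneg k
  calc (N.choose k : ℝ) ≤ N ^ k / k.factorial := Nat.choose_le_pow_div k N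
    _ = (N / k) ^ k * ((k : ℝ) ^ k / k.factorial) := by
        rw [mul_div_assoc', div_pow, div_mul_cancel₀ _ (by positivity)]
    _ ≤ (N / k) ^ k * exp 1 ^ k := by gcongr
    _ = (exp 1 * N / k) ^ k := by ring

lemma choose_add_mul_pow_le {m n : ℕ} {p δ : ℝ} (hm : 0 < m) (hn : 0 < n) (hp0 : 0 ≤ p)
    (hp : p ≤ δ * n / (exp 1 * m)) :
    ((m + n).choose n : ℝ) * p ^ n ≤ (δ * (1 + n / m)) ^ n :=
  calc ((m + n).choose n : ℝ) * p ^ n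
      ≤ (exp 1 * ↑(m + n) / n) ^ n * (δ * n / (exp 1 * m)) ^ n := by
        gcongr
        exact choose_le_exp_mul_div_pow _ _
    _ = (δ * (1 + n / m)) ^ n := by
        rw [← mul_pow]
        congr 1
        push_cast
        field_simp

lemma eventually_mul_log_pos {c : ℝ} (hc : 0 < c) :
    ∀ᶠ n : ℕ in atTop, 0 < c * n * log n := by
  filter_upwards [eventually_ge_atTop 2] with n hn
  have hlog : 0 < log n := log_pos (by exact_mod_cast hn)
  positivity

lemma tendsto_natCast_div_of_mul_log_le {f : ℕ → ℝ} {c : ℝ} (hc : 0 < c)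
    (hf : ∀ᶠ n : ℕ in atTop, c * n * log n ≤ f n) :
    Tendsto (fun n : ℕ => n / f n) atTop (𝓝 0) := by
  have hlog : Tendsto (fun n : ℕ => (c * log n)⁻¹) atTop (𝓝 0) :=
    ((tendsto_log_atTop.comp tendsto_natCast_atTop_atTop).const_mul_atTop hc).inv_tendsto_atTop
  refine squeeze_zero' ?_ ?_ hlog
  · filter_upwards [hf, eventually_mul_log_pos hc] with n hn hpos
    exact div_nonneg n.cast_nonneg (hpos.le.trans hn)
  · filter_upwards [hf, eventually_mul_log_pos hc] with n hn hpos
    calc (n : ℝ) / f n ≤ n / (c * n * log n) := div_le_div_of_nonneg_left n.cast_nonneg hpos hn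
      _ = (c * log n)⁻¹ := by
        have : (n : ℝ) ≠ 0 := by rintro h; simp [h] at hpos
        field_simp

/-- If `p ≤ (1-ε) n /(e M)` with `ε > 0` constant and `M = Ω(n log n)`, then
w.h.p. `G(n,p)` has no Hamilton cycle `H` (anchored to start at the first
vertex) with `ι(H) ≤ M`. -/
theorem stmt_3 (ε : ℝ) (hε : 0 < ε) (M : ℕ → ℕ) (p : ℕ → ℝ)
    (hM : ∃ c : ℝ, 0 < c ∧ ∀ᶠ n : ℕ in atTop, c * n * Real.log n ≤ M n)
    (hp0 : ∀ n, 0 ≤ p n)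
    (hp : ∀ᶠ n : ℕ in atTop, p n ≤ (1 - ε) * n / (Real.exp 1 * M n)) :
    Tendsto (fun n => erP n (p n) (fun G => ∃ σ : Equiv.Perm (Fin n),
        (∀ i : Fin n, (i : ℕ) = 0 → (σ i : ℕ) = 0) ∧
        IsHamSeq G σ ∧ inversions σ ≤ M n))
      atTop (𝓝 0) := by
  obtain ⟨c, hc, hMc⟩ := hM
  set δ := max (1 - ε) 0
  have hδ0 : 0 ≤ δ := le_max_right _ _
  have hδ1 : δ < 1 := max_lt (by linarith) one_pos
  have hratio := tendsto_natCast_div_of_mul_log_le hc hMc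
  have hMpos : ∀ᶠ n in atTop, 0 < M n := by
    filter_upwards [hMc, eventually_mul_log_pos hc] with n hn hpos
    exact_mod_cast hpos.trans_le hn
  have hpδ : ∀ᶠ n in atTop, p n ≤ δ * n / (exp 1 * M n) :=
    hp.mono fun n h => h.trans (by gcongr; exact le_max_left _ _)
  have hp1 : ∀ᶠ n in atTop, p n ≤ 1 := by
    have : Tendsto (fun n : ℕ => δ / exp 1 * (n / M n)) atTop (𝓝 0) := by
      simpa using hratio.const_mul (δ / exp 1)
    filter_upwards [hpδ, this.eventually_le_const one_pos] with n h h1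
    exact h.trans ((div_mul_div_comm δ (exp 1) n (M n)).symm.trans_le h1)
  have hbase : ∀ᶠ n : ℕ in atTop, δ * (1 + n / M n) < (1 + δ) / 2 := by
    refine Tendsto.eventually_lt_const (by linarith) (?_ : Tendsto _ atTop (𝓝 δ))
    simpa using (hratio.const_add 1).const_mul δ
  refine squeeze_zero' (hp1.mono fun n h => erP_nonneg (hp0 n) h _) ?_
    (tendsto_pow_atTop_nhds_zero_of_lt_one (r := (1 + δ) / 2) (by linarith) (by linarith))
  filter_upwards [hMpos, hpδ, hp1, hbase, eventually_ge_atTop 3] with n hMn hpδn hp1n hbn hn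
  calc _ ≤ erP n (p n) (fun G => ∃ σ, IsHamSeq G σ ∧ inversions σ ≤ M n) :=
        erP_mono (hp0 n) hp1n fun _ ⟨σ, _, h⟩ => ⟨σ, h⟩
    _ ≤ (M n + n).choose n * p n ^ n := erP_exists_isHamSeq_inversions_le hn (hp0 n) hp1n _
    _ ≤ (δ * (1 + n / M n)) ^ n := choose_add_mul_pow_le hMn (by omega) (hp0 n) hpδn
    _ ≤ ((1 + δ) / 2) ^ n := by gcongr
end

section
/- Let p₁ ~ (log n)/(2n). The expected number of vertices of G(n,p₁) with degree at most (log n)/40 is at most n^{3/5} for large n, and hence with high probability the number of such vertices is at most n^{2/3}. -/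
/-!
The degree of a vertex is `Bin(n - 1, p)` with `p ∼ log n / (2n)`. The exponential-moment
bound `P(deg ≤ t) ≤ e^{3t} E[e^{-3 deg}] = e^{3t} (1 - (1 - e⁻³) p)^{n-1} ≤ e^{3t - (1 - e⁻³) p (n-1)}`
at `t = log n / 40`, summed over the `n` vertices, bounds the expected count by
`n^{1 + 3/40 - (1 - e⁻³)/2 + o(1)}`, and `e⁻³ < 1/20` puts the exponent below `3/5`.
Markov's inequality at level `n^{2/3}` then bounds the probability of more such vertices
by `n^{-1/15}`.
-/

open Filter Topology

attribute [local instance] Classical.propDecidable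

/-- Expectation of `f` over `G(n,p)`. -/
noncomputable def erE (n : ℕ) (p : ℝ) (f : SimpleGraph (Fin n) → ℝ) : ℝ :=
  ∑ ω : Sym2 (Fin n) → Bool, erWeight n p ω * f (graphOf ω)

noncomputable def countLow (n : ℕ) (G : SimpleGraph (Fin n)) : ℕ :=
  (Finset.univ.filter (fun v : Fin n =>
    ((Finset.univ.filter (fun w => G.Adj v w)).card : ℝ) ≤ Real.log n / 40)).card

namespace ErdosRenyi

open Finset Real

section Model

variable {n : ℕ} {p : ℝ}

noncomputable def edgeProb (p : ℝ) (e : Sym2 (Fin n)) (b : Bool) : ℝ :=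
  if e.IsDiag then (if b then 0 else 1) else (if b then p else 1 - p)

lemma erWeight_eq_prod (ω : Sym2 (Fin n) → Bool) :
    erWeight n p ω = ∏ e, edgeProb p e (ω e) := rfl

lemma sum_edgeProb (e : Sym2 (Fin n)) : ∑ b, edgeProb p e b = 1 := by
  by_cases he : e.IsDiag <;> simp [edgeProb, he]

lemma erWeight_nonneg (h0 : 0 ≤ p) (h1 : p ≤ 1) (ω : Sym2 (Fin n) → Bool) :
    0 ≤ erWeight n p ω :=
  prod_nonneg fun e _ => by split_ifs <;> linarith

lemma sum_erWeight_mul_prod (g : Sym2 (Fin n) → Bool → ℝ) :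
    ∑ ω, erWeight n p ω * ∏ e, g e (ω e) = ∏ e, ∑ b, edgeProb p e b * g e b := by
  simp only [erWeight_eq_prod, ← prod_mul_distrib]
  exact (Fintype.prod_sum fun e b => edgeProb p e b * g e b).symm

lemma sum_erWeight : ∑ ω : Sym2 (Fin n) → Bool, erWeight n p ω = 1 := by
  have h := sum_erWeight_mul_prod (n := n) (p := p) fun _ _ => 1
  simp only [prod_const_one, mul_one] at h
  rw [h]
  exact prod_eq_one fun e _ => sum_edgeProb e

lemma sum_erWeight_mul_pow_card (S : Finset (Sym2 (Fin n))) (hS : ∀ e ∈ S, ¬ e.IsDiag)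
    (r : ℝ) :
    ∑ ω, erWeight n p ω * r ^ #{e ∈ S | ω e} = (1 - p + p * r) ^ #S := by
  have hprod : ∀ ω : Sym2 (Fin n) → Bool,
      r ^ #{e ∈ S | ω e} = ∏ e, if e ∈ S ∧ ω e then r else 1 := by
    intro ω
    rw [prod_ite, prod_const_one, mul_one, prod_const]
    congr 2
    ext e
    simp
  simp only [hprod]
  rw [sum_erWeight_mul_prod (fun e b => if e ∈ S ∧ b then r else 1)]
  have hedge : ∀ e, ∑ b, edgeProb p e b * (if e ∈ S ∧ b then r else 1)
      = if e ∈ S then 1 - p + p * r else 1 := by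
    intro e
    by_cases he : e ∈ S
    · simp [edgeProb, he, hS e he, add_comm]
    · simpa [he] using sum_edgeProb (p := p) e
  simp only [hedge, prod_ite_mem, univ_inter, prod_const]

lemma erE_mono (h0 : 0 ≤ p) (h1 : p ≤ 1) {f g : SimpleGraph (Fin n) → ℝ}
    (h : ∀ G, f G ≤ g G) : erE n p f ≤ erE n p g :=
  sum_le_sum fun ω _ => mul_le_mul_of_nonneg_left (h _) (erWeight_nonneg h0 h1 ω)

lemma erE_const (c : ℝ) : erE n p (fun _ => c) = c := by
  rw [erE, ← sum_mul, sum_erWeight, one_mul]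

lemma erE_const_mul (c : ℝ) (f : SimpleGraph (Fin n) → ℝ) :
    erE n p (fun G => c * f G) = c * erE n p f := by
  simp only [erE, mul_sum, mul_left_comm]

lemma erE_sum {ι : Type*} (s : Finset ι) (f : ι → SimpleGraph (Fin n) → ℝ) :
    erE n p (fun G => ∑ i ∈ s, f i G) = ∑ i ∈ s, erE n p (f i) := by
  simp only [erE, mul_sum]
  exact sum_comm

lemma erP_eq_erE (A : SimpleGraph (Fin n) → Prop) :
    erP n p A = erE n p (fun G => if A G then 1 else 0) := rfl

lemma erP_le_one (h0 : 0 ≤ p) (h1 : p ≤ 1) (A : SimpleGraph (Fin n) → Prop) :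
    erP n p A ≤ 1 := by
  rw [erP_eq_erE]
  exact (erE_mono h0 h1 fun G => by split_ifs <;> norm_num).trans_eq (erE_const 1)

lemma one_sub_erP_le_div (h0 : 0 ≤ p) (h1 : p ≤ 1) {f : SimpleGraph (Fin n) → ℝ}
    (hf : ∀ G, 0 ≤ f G) {t : ℝ} (ht : 0 < t) :
    1 - erP n p (fun G => f G ≤ t) ≤ erE n p f / t := by
  have hsplit : t * (1 - erP n p (fun G => f G ≤ t))
      = erE n p (fun G => t * (1 - if f G ≤ t then 1 else 0)) := by
    rw [erE_const_mul, erP_eq_erE]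
    simp only [erE, mul_sub, sum_sub_distrib, mul_one, sum_erWeight]
  rw [le_div_iff₀ ht, mul_comm, hsplit]
  refine erE_mono h0 h1 fun G => ?_
  split_ifs with h
  · simpa using hf G
  · linarith

end Model

section Degree

variable {n : ℕ}

def incidentPairs (v : Fin n) : Finset (Sym2 (Fin n)) :=
  (univ.erase v).image fun w => s(v, w)

lemma mk_injective_right (v : Fin n) : Function.Injective fun w => s(v, w) :=
  fun _ _ h => Sym2.congr_right.mp h

lemma card_incidentPairs (v : Fin n) : #(incidentPairs v) = n - 1 := by
  rw [incidentPairs, card_image_of_injective _ (mk_injective_right v),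
    card_erase_of_mem (mem_univ v), card_univ, Fintype.card_fin]

lemma not_isDiag_of_mem_incidentPairs {v : Fin n} {e : Sym2 (Fin n)}
    (he : e ∈ incidentPairs v) : ¬ e.IsDiag := by
  obtain ⟨w, hw, rfl⟩ := mem_image.mp he
  simpa [eq_comm] using ne_of_mem_erase hw

lemma graphOf_adj {ω : Sym2 (Fin n) → Bool} {v w : Fin n} :
    (graphOf ω).Adj v w ↔ v ≠ w ∧ ω s(v, w) := by
  simp [graphOf, Sym2.eq_swap]

lemma card_adj_graphOf (ω : Sym2 (Fin n) → Bool) (v : Fin n) :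
    #{w | (graphOf ω).Adj v w} = #{e ∈ incidentPairs v | ω e} := by
  rw [incidentPairs, filter_image, card_image_of_injective _ (mk_injective_right v)]
  congr 1
  ext w
  simp only [mem_filter, mem_univ, true_and, and_true, mem_erase, graphOf_adj, ne_comm]

lemma erE_pow_card_adj {p : ℝ} (v : Fin n) (r : ℝ) :
    erE n p (fun G => r ^ #{w | G.Adj v w}) = (1 - p + p * r) ^ (n - 1) := by
  simp only [erE, card_adj_graphOf]
  rw [sum_erWeight_mul_pow_card _ (fun _ => not_isDiag_of_mem_incidentPairs),
    card_incidentPairs]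

end Degree

section Chernoff

variable {n : ℕ} {p s : ℝ}

lemma one_sub_pow_le_exp_neg_mul {x : ℝ} (hx : x ≤ 1) (k : ℕ) :
    (1 - x) ^ k ≤ exp (-(x * k)) :=
  calc (1 - x) ^ k ≤ exp (-x) ^ k := pow_le_pow_left₀ (by linarith) (one_sub_le_exp_neg x) k
    _ = exp (-(x * k)) := by rw [← exp_nat_mul]; ring_nf

lemma ite_le_exp_mul_pow (hs : 0 ≤ s) (d : ℕ) (t : ℝ) :
    (if (d : ℝ) ≤ t then 1 else 0 : ℝ) ≤ exp (s * t) * exp (-s) ^ d := by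
  rw [← exp_nat_mul, ← exp_add]
  split_ifs with h
  · exact one_le_exp (by nlinarith)
  · exact (exp_pos _).le

lemma erE_ite_card_adj_le_le (h0 : 0 ≤ p) (h1 : p ≤ 1) (hs : 0 ≤ s) (v : Fin n) (t : ℝ) :
    erE n p (fun G => if (#{w | G.Adj v w} : ℝ) ≤ t then 1 else 0)
      ≤ exp (s * t) * (1 - p + p * exp (-s)) ^ (n - 1) :=
  calc _ ≤ erE n p (fun G => exp (s * t) * exp (-s) ^ #{w | G.Adj v w}) :=
        erE_mono h0 h1 fun _ => ite_le_exp_mul_pow hs _ t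
    _ = _ := by rw [erE_const_mul, erE_pow_card_adj]

lemma countLow_eq_sum (G : SimpleGraph (Fin n)) :
    (countLow n G : ℝ) = ∑ v, if (#{w | G.Adj v w} : ℝ) ≤ log n / 40 then 1 else 0 := by
  rw [countLow, card_filter]
  push_cast
  rfl

lemma erE_countLow_le (h0 : 0 ≤ p) (h1 : p ≤ 1) (hs : 0 ≤ s) :
    erE n p (fun G => (countLow n G : ℝ))
      ≤ n * (exp (s * (log n / 40)) * (1 - p + p * exp (-s)) ^ (n - 1)) := by
  simp only [countLow_eq_sum]
  rw [erE_sum]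
  calc _ ≤ ∑ _ : Fin n, exp (s * (log n / 40)) * (1 - p + p * exp (-s)) ^ (n - 1) :=
        sum_le_sum fun v _ => erE_ite_card_adj_le_le h0 h1 hs v _
    _ = _ := by rw [sum_const, card_univ, Fintype.card_fin, nsmul_eq_mul]

end Chernoff

section Asymptotics

lemma exp_neg_three_lt : exp (-3) < 1 / 20 := by
  have h : (20 : ℝ) < exp 3 :=
    calc (20 : ℝ) < 2.7182818283 ^ 3 := by norm_num
      _ < exp 1 ^ 3 := by gcongr; exact exp_one_gt_d9
      _ = exp 3 := by rw [← exp_nat_mul]; norm_num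
  rw [exp_neg, one_div]
  exact inv_strictAnti₀ (by norm_num) h

/-- The constant `19 / 40` is `1 + 3 / 40 - 3 / 5`; it lies below `(1 - e⁻³) / 2`. -/
lemma mul_exp_mul_pow_le_rpow {m : ℕ} {p : ℝ} (hm : 0 < m) (h0 : 0 ≤ p) (h1 : p ≤ 1)
    (hlog : 19 / 40 * log m ≤ (1 - exp (-3)) * p * (m - 1)) :
    m * (exp (3 * (log m / 40)) * (1 - p + p * exp (-3)) ^ (m - 1))
      ≤ (m : ℝ) ^ ((3 : ℝ) / 5) := by
  have hm' : (0 : ℝ) < m := by exact_mod_cast hm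
  have hbin : (1 - p + p * exp (-3)) ^ (m - 1) ≤ exp (-(19 / 40 * log m)) :=
    calc _ = (1 - (1 - exp (-3)) * p) ^ (m - 1) := by ring_nf
      _ ≤ exp (-((1 - exp (-3)) * p * (m - 1 : ℕ))) :=
        one_sub_pow_le_exp_neg_mul (by nlinarith [exp_pos (-3), exp_neg_three_lt]) _
      _ ≤ exp (-(19 / 40 * log m)) := by rw [Nat.cast_pred hm]; gcongr
  calc _ ≤ exp (log m) * (exp (3 * (log m / 40)) * exp (-(19 / 40 * log m))) := by
        rw [exp_log hm']; gcongr
    _ = exp (3 / 5 * log m) := by rw [← exp_add, ← exp_add]; ring_nf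
    _ = (m : ℝ) ^ ((3 : ℝ) / 5) := by rw [rpow_def_of_pos hm', mul_comm]

variable {η p₁ : ℕ → ℝ}

lemma eventually_nonneg_and_le_one (hη : Tendsto η atTop (𝓝 0))
    (hp : ∀ n : ℕ, p₁ n = (1 + η n) * log n / (2 * n)) :
    ∀ᶠ n : ℕ in atTop, 0 ≤ p₁ n ∧ p₁ n ≤ 1 := by
  filter_upwards [hη.eventually (Icc_mem_nhds neg_one_lt_zero one_pos)] with n ⟨hlo, hhi⟩
  have hlog := log_natCast_nonneg n
  rw [hp n]
  refine ⟨div_nonneg (mul_nonneg (by linarith) hlog) (by positivity), ?_⟩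
  refine div_le_one_of_le₀ ?_ (by positivity)
  exact mul_le_mul (by linarith) (log_le_self (Nat.cast_nonneg n)) hlog (by norm_num)

lemma eventually_log_le_mul_prob (hη : Tendsto η atTop (𝓝 0))
    (hp : ∀ n : ℕ, p₁ n = (1 + η n) * log n / (2 * n)) :
    ∀ᶠ n : ℕ in atTop, 19 / 40 * log n ≤ (1 - exp (-3)) * p₁ n * (n - 1) := by
  set a : ℕ → ℝ := fun n => (1 - exp (-3)) * (1 + η n) * (1 - 1 / n) / 2
  have ha : Tendsto a atTop (𝓝 ((1 - exp (-3)) * (1 + 0) * (1 - 0) / 2)) :=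
    (((tendsto_const_nhds.add hη).const_mul _).mul
      (tendsto_const_nhds.sub tendsto_one_div_atTop_nhds_zero_nat)).div_const 2
  have hlim : 19 / 40 < (1 - exp (-3)) * (1 + 0) * (1 - 0) / 2 := by
    linarith [exp_neg_three_lt]
  filter_upwards [ha.eventually_const_lt hlim, eventually_gt_atTop 0] with n hn hn0
  have hn' : (n : ℝ) ≠ 0 := by positivity
  have hrw : (1 - exp (-3)) * p₁ n * (n - 1) = a n * log n := by
    simp only [a, hp n]; field_simp
  rw [hrw]
  exact mul_le_mul_of_nonneg_right hn.le (log_natCast_nonneg n)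

lemma tendsto_erP_le_rpow {p : ℕ → ℝ} (hp : ∀ᶠ n in atTop, 0 ≤ p n ∧ p n ≤ 1)
    {f : (n : ℕ) → SimpleGraph (Fin n) → ℝ} (hf : ∀ n G, 0 ≤ f n G) {a b : ℝ} (hab : a < b)
    (hE : ∀ᶠ n : ℕ in atTop, erE n (p n) (f n) ≤ (n : ℝ) ^ a) :
    Tendsto (fun n => erP n (p n) (fun G => f n G ≤ (n : ℝ) ^ b)) atTop (𝓝 1) := by
  have hlow : Tendsto (fun n : ℕ => 1 - (n : ℝ) ^ (a - b)) atTop (𝓝 1) := by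
    have h := (tendsto_rpow_neg_atTop (sub_pos.mpr hab)).comp tendsto_natCast_atTop_atTop
    simpa [neg_sub] using tendsto_const_nhds.sub h
  refine tendsto_of_tendsto_of_tendsto_of_le_of_le' hlow tendsto_const_nhds ?_ ?_
  · filter_upwards [hp, hE, eventually_gt_atTop 0] with n ⟨h0, h1⟩ hEn hn
    have hn' : (0 : ℝ) < n := by exact_mod_cast hn
    have hb := rpow_pos_of_pos hn' b
    have hmarkov := one_sub_erP_le_div h0 h1 (hf n) hb
    have hdiv := div_le_div_of_nonneg_right hEn hb.le
    rw [rpow_sub hn']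
    linarith
  · filter_upwards [hp] with n ⟨h0, h1⟩ using erP_le_one h0 h1 _

end Asymptotics

end ErdosRenyi

open ErdosRenyi in
/-- For `p₁ ~ log n / (2n)`: the expected number of vertices of `G(n,p₁)` of
degree at most `log n / 40` is at most `n^{3/5}` for large `n`, and w.h.p. the
number of such vertices is at most `n^{2/3}`. -/
theorem stmt_7 (η : ℕ → ℝ) (hη : Tendsto η atTop (𝓝 0)) (p₁ : ℕ → ℝ)
    (hp : ∀ n : ℕ, p₁ n = (1 + η n) * Real.log n / (2 * n)) :
    (∀ᶠ n : ℕ in atTop,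
        erE n (p₁ n) (fun G => (countLow n G : ℝ)) ≤ (n : ℝ) ^ ((3 : ℝ) / 5))
    ∧ Tendsto (fun n => erP n (p₁ n) (fun G =>
          (countLow n G : ℝ) ≤ (n : ℝ) ^ ((2 : ℝ) / 3)))
        atTop (𝓝 1) := by
  have hprob := eventually_nonneg_and_le_one hη hp
  have hexp : ∀ᶠ n : ℕ in atTop,
      erE n (p₁ n) (fun G => (countLow n G : ℝ)) ≤ (n : ℝ) ^ ((3 : ℝ) / 5) := by
    filter_upwards [hprob, eventually_log_le_mul_prob hη hp, eventually_gt_atTop 0]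
      with n ⟨h0, h1⟩ hlog hn
    exact (erE_countLow_le h0 h1 zero_le_three).trans (mul_exp_mul_pow_le_rpow hn h0 h1 hlog)
  exact ⟨hexp, tendsto_erP_le_rpow (f := fun n G => (countLow n G : ℝ)) hprob
    (fun _ _ => Nat.cast_nonneg _) (by norm_num) hexp⟩
end

section
/- Let e_1,...,e_N be the edges of K_n, and let α_1,...,α_k be positive with α_1+...+α_k = 1. Let β = (min_i α_i)^{−1}. Let Γ_t be the random graph in which each of e_1,...,e_t is present independently with probability βp and, if present, is assigned one of the k colors independently with probabilities α_1,...,α_k, while each e_i with i > t is present independently with probability p and is uncolored. If G_t denotes the event of containing a (c,t)-proper Hamilton cycle for a fixed color sequence c, then P(Γ_t ∈ G_t) ≤ P(Γ_{t+1} ∈ G_{t+1}). -/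
attribute [local instance] Classical.propDecidable

/-- Weight of an outcome in the partially-colored model `Γ_t`: edges
`e_i` with `i < t` (0-indexed) are present with probability `βp`, edges with
`i ≥ t` are present with probability `p`; independently each edge carries a
random color with distribution `α`. -/
noncomputable def gammaWeight (N k : ℕ) (t : ℕ) (p β : ℝ) (α : Fin k → ℝ)
    (b : Fin N → Bool) (f : Fin N → Fin k) : ℝ :=
  (∏ i : Fin N,
      if (i : ℕ) < t then (if b i then β * p else 1 - β * p)
      else (if b i then p else 1 - p)) * ∏ i : Fin N, α (f i)

/-- Probability of an event `A` (depending on presence and colors) under `Γ_t`. -/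
noncomputable def gammaP (N k : ℕ) (t : ℕ) (p β : ℝ) (α : Fin k → ℝ)
    (A : (Fin N → Bool) → (Fin N → Fin k) → Prop) : ℝ :=
  ∑ b : Fin N → Bool, ∑ f : Fin N → Fin k,
    gammaWeight N k t p β α b f * (if A b f then 1 else 0)

/-- The event `G_t`: there is a `(c,t)`-proper Hamilton cycle, i.e. a Hamilton
cycle `σ 0, σ 1, ..., σ (n-1)` of the present edges, whose `i`-th edge
`{σ i, σ (i+1)}` has color `c i` whenever its index is `< t`.  Here
`ε : Fin N ≃ {non-diagonal pairs}` enumerates the edges of `K_n`. -/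
def ProperHC (n N k : ℕ) (ε : Fin N ≃ {e : Sym2 (Fin n) // ¬ e.IsDiag})
    (c : Fin n → Fin k) (t : ℕ)
    (b : Fin N → Bool) (f : Fin N → Fin k) : Prop :=
  ∃ σ : Equiv.Perm (Fin n), ∀ i : Fin n, ∃ j : Fin N,
    (ε j).1 = s(σ i, σ (finRotate n i)) ∧ b j = true ∧
    ((j : ℕ) < t → f j = c i)

/-! ### Auxiliary machinery -/

/-- Recombine a value at `tF` with values elsewhere into a function on `Fin N`. -/
noncomputable def recomb {N : ℕ} {γ : Type*} (tF : Fin N) (u : γ)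
    (r : {j : Fin N // j ≠ tF} → γ) : Fin N → γ :=
  fun j => if h : j = tF then u else r ⟨j, h⟩

lemma recomb_same {N : ℕ} {γ : Type*} (tF : Fin N) (u : γ)
    (r : {j : Fin N // j ≠ tF} → γ) : recomb tF u r tF = u := by
  simp [recomb]

lemma recomb_ne {N : ℕ} {γ : Type*} (tF : Fin N) (u : γ)
    (r : {j : Fin N // j ≠ tF} → γ) {j : Fin N} (h : j ≠ tF) :
    recomb tF u r j = r ⟨j, h⟩ := by
  simp [recomb, h]

lemma recomb_eq_symm {N : ℕ} {γ : Type*} (tF : Fin N) (x : γ × ({j : Fin N // j ≠ tF} → γ)) :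
    (Equiv.funSplitAt tF γ).symm x = recomb tF x.1 x.2 := by
  funext j
  by_cases h : j = tF <;> simp [recomb, h, Equiv.funSplitAt_symm_apply]

lemma sum3_comm {A C D : Type*} [Fintype A] [Fintype C] [Fintype D]
    (g : A → C → D → ℝ) :
    ∑ u : A, ∑ v : C, ∑ s : D, g u v s = ∑ s : D, ∑ u : A, ∑ v : C, g u v s :=
  calc ∑ u : A, ∑ v : C, ∑ s : D, g u v s
      = ∑ u : A, ∑ s : D, ∑ v : C, g u v s :=
        Finset.sum_congr rfl fun _ _ => Finset.sum_comm
    _ = ∑ s : D, ∑ u : A, ∑ v : C, g u v s := Finset.sum_comm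

lemma sum4_reorder {A B C D : Type*} [Fintype A] [Fintype B] [Fintype C] [Fintype D]
    (g : A → B → C → D → ℝ) :
    ∑ u : A, ∑ r : B, ∑ v : C, ∑ s : D, g u r v s
      = ∑ r : B, ∑ s : D, ∑ u : A, ∑ v : C, g u r v s :=
  calc ∑ u : A, ∑ r : B, ∑ v : C, ∑ s : D, g u r v s
      = ∑ r : B, ∑ u : A, ∑ v : C, ∑ s : D, g u r v s := Finset.sum_comm
    _ = ∑ r : B, ∑ s : D, ∑ u : A, ∑ v : C, g u r v s :=
        Finset.sum_congr rfl fun _ _ => sum3_comm _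

lemma prod_split {N : ℕ} (tF : Fin N) (g : Fin N → ℝ) :
    ∏ i, g i = g tF * ∏ i : {j : Fin N // j ≠ tF}, g i := by
  rw [← Finset.mul_prod_erase Finset.univ g (Finset.mem_univ tF),
    Finset.prod_subtype (p := fun j => j ≠ tF) (Finset.univ.erase tF) (fun x => by simp) g]

section HC

variable {n N k : ℕ} {ε : Fin N ≃ {e : Sym2 (Fin n) // ¬ e.IsDiag}} {c : Fin n → Fin k}

lemma hc_mono {t' : ℕ} {b b' : Fin N → Bool} {f : Fin N → Fin k}
    (hb : ∀ j, b j = true → b' j = true) :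
    ProperHC n N k ε c t' b f → ProperHC n N k ε c t' b' f := by
  rintro ⟨σ, hσ⟩
  refine ⟨σ, fun i => ?_⟩
  obtain ⟨j, h1, h2, h3⟩ := hσ i
  exact ⟨j, h1, hb j h2, h3⟩

lemma hc_congr {t' : ℕ} {b : Fin N → Bool} {f f' : Fin N → Fin k}
    (hf : ∀ j : Fin N, (j : ℕ) < t' → b j = true → f j = f' j) :
    ProperHC n N k ε c t' b f → ProperHC n N k ε c t' b f' := by
  rintro ⟨σ, hσ⟩
  refine ⟨σ, fun i => ?_⟩
  obtain ⟨j, h1, h2, h3⟩ := hσ i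
  exact ⟨j, h1, h2, fun hj => (hf j hj h2) ▸ h3 hj⟩

lemma hc_step {t : ℕ} {b : Fin N → Bool} {f : Fin N → Fin k} {tF : Fin N}
    (htF : (tF : ℕ) = t) (hb : b tF = false) :
    ProperHC n N k ε c t b f → ProperHC n N k ε c (t + 1) b f := by
  rintro ⟨σ, hσ⟩
  refine ⟨σ, fun i => ?_⟩
  obtain ⟨j, h1, h2, h3⟩ := hσ i
  refine ⟨j, h1, h2, fun hj => h3 ?_⟩
  have hne : j ≠ tF := by rintro rfl; rw [hb] at h2; exact Bool.false_ne_true h2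
  have : (j : ℕ) ≠ t := fun e => hne (Fin.ext (e.trans htF.symm))
  omega

lemma edge_inj (hn : 3 ≤ n) (σ : Equiv.Perm (Fin n)) {i i' : Fin n}
    (h : s(σ i, σ (finRotate n i)) = s(σ i', σ (finRotate n i'))) : i = i' := by
  obtain ⟨m, rfl⟩ : ∃ m, n = m + 3 := ⟨n - 3, by omega⟩
  rw [Sym2.eq_iff] at h
  rcases h with ⟨h1, _⟩ | ⟨h1, h2⟩
  · exact σ.injective h1
  · have e1 : i = finRotate (m + 3) i' := σ.injective h1
    have e2 : finRotate (m + 3) i = i' := σ.injective h2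
    rw [finRotate_succ_apply] at e1 e2
    have h3 : i' + 1 + 1 = i' := e1 ▸ e2
    have h5 : i' + (1 + 1) = i' + 0 := by rw [add_zero, ← add_assoc]; exact h3
    have h6 : (1 + 1 : Fin (m + 3)) = 0 := add_left_cancel h5
    have h7 := congrArg Fin.val h6
    rw [Fin.val_add, Fin.val_zero, Fin.val_one, Nat.mod_eq_of_lt (by omega)] at h7
    omega

lemma hc_key (hn : 3 ≤ n) {t : ℕ} {b : Fin N → Bool} {f : Fin N → Fin k} {tF : Fin N}
    (htF : (tF : ℕ) = t)
    (h1 : ProperHC n N k ε c t b f)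
    (h0 : ¬ ProperHC n N k ε c t (Function.update b tF false) f) :
    ∃ i₀ : Fin n, ProperHC n N k ε c (t + 1) b (Function.update f tF (c i₀)) := by
  obtain ⟨σ, hσ⟩ := h1
  by_cases hex : ∃ i₀ : Fin n, (ε tF).1 = s(σ i₀, σ (finRotate n i₀))
  · obtain ⟨i₀, hi₀⟩ := hex
    refine ⟨i₀, σ, fun i => ?_⟩
    obtain ⟨j, hj1, hj2, hj3⟩ := hσ i
    refine ⟨j, hj1, hj2, fun hjt => ?_⟩
    by_cases hjtF : j = tF
    · subst hjtF
      rw [Function.update_self]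
      have : i = i₀ := edge_inj hn σ (hj1.symm.trans hi₀)
      rw [this]
    · rw [Function.update_of_ne hjtF]
      refine hj3 ?_
      have : (j : ℕ) ≠ t := fun e => hjtF (Fin.ext (e.trans htF.symm))
      omega
  · exfalso
    apply h0
    refine ⟨σ, fun i => ?_⟩
    obtain ⟨j, hj1, hj2, hj3⟩ := hσ i
    have hne : j ≠ tF := fun e => hex ⟨i, e ▸ hj1⟩
    exact ⟨j, hj1, by rw [Function.update_of_ne hne]; exact hj2, hj3⟩

end HC


lemma sum_pair_split {N k : ℕ} (tF : Fin N) (X : (Fin N → Bool) → (Fin N → Fin k) → ℝ) :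
    ∑ b : Fin N → Bool, ∑ f : Fin N → Fin k, X b f
      = ∑ r : ({j : Fin N // j ≠ tF} → Bool), ∑ s : ({j : Fin N // j ≠ tF} → Fin k),
          ∑ u : Bool, ∑ v : Fin k, X (recomb tF u r) (recomb tF v s) := by
  have e1 : ∀ b, ∑ f : Fin N → Fin k, X b f
      = ∑ v : Fin k, ∑ s : ({j : Fin N // j ≠ tF} → Fin k), X b (recomb tF v s) := by
    intro b
    rw [← Equiv.sum_comp (Equiv.funSplitAt tF (Fin k)).symm (fun f => X b f),
      Fintype.sum_prod_type]
    exact Finset.sum_congr rfl fun v _ => Finset.sum_congr rfl fun s _ => by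
      rw [recomb_eq_symm]
  calc ∑ b : Fin N → Bool, ∑ f : Fin N → Fin k, X b f
      = ∑ u : Bool, ∑ r : ({j : Fin N // j ≠ tF} → Bool),
          ∑ f : Fin N → Fin k, X (recomb tF u r) f := by
        rw [← Equiv.sum_comp (Equiv.funSplitAt tF Bool).symm
          (fun b => ∑ f : Fin N → Fin k, X b f), Fintype.sum_prod_type]
        exact Finset.sum_congr rfl fun u _ => Finset.sum_congr rfl fun r _ => by
          rw [recomb_eq_symm]
    _ = ∑ u : Bool, ∑ r : ({j : Fin N // j ≠ tF} → Bool),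
          ∑ v : Fin k, ∑ s : ({j : Fin N // j ≠ tF} → Fin k),
            X (recomb tF u r) (recomb tF v s) :=
        Finset.sum_congr rfl fun u _ => Finset.sum_congr rfl fun r _ => e1 _
    _ = _ := sum4_reorder _

lemma gammaWeight_recomb {N k : ℕ} (t' : ℕ) (p β : ℝ) (α : Fin k → ℝ) (tF : Fin N)
    (u : Bool) (r : {j : Fin N // j ≠ tF} → Bool)
    (v : Fin k) (s : {j : Fin N // j ≠ tF} → Fin k) :
    gammaWeight N k t' p β α (recomb tF u r) (recomb tF v s)
      = ((if (tF : ℕ) < t' then (if u then β * p else 1 - β * p)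
            else (if u then p else 1 - p)) * α v)
        * ((∏ i : {j : Fin N // j ≠ tF},
              (if ((i : Fin N) : ℕ) < t' then (if r i then β * p else 1 - β * p)
                else (if r i then p else 1 - p)))
           * ∏ i : {j : Fin N // j ≠ tF}, α (s i)) := by
  unfold gammaWeight
  rw [prod_split tF (fun i => if (i : ℕ) < t'
        then (if recomb tF u r i then β * p else 1 - β * p)
        else (if recomb tF u r i then p else 1 - p)),
      prod_split tF (fun i => α (recomb tF v s i)), recomb_same, recomb_same]
  have P1 : (∏ i : {j : Fin N // j ≠ tF},
        if ((i : Fin N) : ℕ) < t' then (if recomb tF u r (i : Fin N) then β * p else 1 - β * p)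
          else (if recomb tF u r (i : Fin N) then p else 1 - p))
      = ∏ i : {j : Fin N // j ≠ tF},
          if ((i : Fin N) : ℕ) < t' then (if r i then β * p else 1 - β * p)
            else (if r i then p else 1 - p) :=
    Finset.prod_congr rfl fun i _ => by rw [recomb_ne tF u r i.2]
  have P2 : (∏ i : {j : Fin N // j ≠ tF}, α (recomb tF v s (i : Fin N)))
      = ∏ i : {j : Fin N // j ≠ tF}, α (s i) :=
    Finset.prod_congr rfl fun i _ => by rw [recomb_ne tF v s i.2]
  rw [P1, P2]
  ring

lemma restW_eq {N : ℕ} (p β : ℝ) (t : ℕ) (tF : Fin N) (htF : (tF : ℕ) = t)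
    (r : {j : Fin N // j ≠ tF} → Bool) :
    (∏ i : {j : Fin N // j ≠ tF},
        (if ((i : Fin N) : ℕ) < t then (if r i then β * p else 1 - β * p)
          else (if r i then p else 1 - p)))
      = ∏ i : {j : Fin N // j ≠ tF},
          (if ((i : Fin N) : ℕ) < t + 1 then (if r i then β * p else 1 - β * p)
            else (if r i then p else 1 - p)) :=
  Finset.prod_congr rfl fun i _ => by
    have hne : ((i : Fin N) : ℕ) ≠ t := fun e => i.2 (Fin.ext (e.trans htF.symm))
    have hiff : (((i : Fin N) : ℕ) < t) ↔ (((i : Fin N) : ℕ) < t + 1) := by omega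
    rw [if_congr hiff rfl rfl]

/-- McDiarmid-style coupling: with `β = (min_i α_i)⁻¹`, the probability that
`Γ_t` contains a `(c,t)`-proper Hamilton cycle is monotone nondecreasing
in `t`. -/
theorem stmt_15 (n N k : ℕ) (hn : 3 ≤ n) (hk : 0 < k) (hN : N = n.choose 2)
    (ε : Fin N ≃ {e : Sym2 (Fin n) // ¬ e.IsDiag})
    (α : Fin k → ℝ) (hα : ∀ j, 0 < α j) (hαsum : ∑ j, α j = 1)
    (β : ℝ)
    (hβ : β = (Finset.univ.inf' ⟨⟨0, hk⟩, Finset.mem_univ _⟩ α)⁻¹)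
    (p : ℝ) (hp0 : 0 ≤ p) (hp1 : β * p ≤ 1)
    (c : Fin n → Fin k) (t : ℕ) (ht : t < N) :
    gammaP N k t p β α (ProperHC n N k ε c t)
      ≤ gammaP N k (t + 1) p β α (ProperHC n N k ε c (t + 1)) := by
  -- scalar preliminaries
  have hm0 : 0 < Finset.univ.inf' ⟨⟨0, hk⟩, Finset.mem_univ _⟩ α := by
    obtain ⟨j₀, -, hmj⟩ := Finset.exists_mem_eq_inf'
      (⟨⟨0, hk⟩, Finset.mem_univ _⟩ : (Finset.univ : Finset (Fin k)).Nonempty) α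
    rw [hmj]; exact hα j₀
  have hmle : ∀ j, Finset.univ.inf' ⟨⟨0, hk⟩, Finset.mem_univ _⟩ α ≤ α j :=
    fun j => Finset.inf'_le α (Finset.mem_univ j)
  have hm1 : Finset.univ.inf' ⟨⟨0, hk⟩, Finset.mem_univ _⟩ α ≤ 1 := by
    refine le_trans (hmle ⟨0, hk⟩) ?_
    rw [← hαsum]
    exact Finset.single_le_sum (fun j _ => (hα j).le) (Finset.mem_univ _)
  have hβ0 : 0 < β := by rw [hβ]; exact inv_pos.2 hm0
  have hβ1 : 1 ≤ β := by
    rw [hβ]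
    rw [le_inv_comm₀ one_pos hm0]
    simpa using hm1
  have hple : p ≤ 1 := le_trans (le_mul_of_one_le_left hp0 hβ1) hp1
  have h1p : (0:ℝ) ≤ 1 - p := by linarith
  have hbp : (0:ℝ) ≤ β * p := mul_nonneg hβ0.le hp0
  have h1bp : (0:ℝ) ≤ 1 - β * p := by linarith
  have hpβα : ∀ v, p ≤ β * p * α v := by
    intro v
    have h1 : (1:ℝ) ≤ β * α v := by
      rw [hβ, inv_mul_eq_div, le_div_iff₀ hm0, one_mul]
      exact hmle v
    calc p = p * 1 := (mul_one p).symm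
      _ ≤ p * (β * α v) := mul_le_mul_of_nonneg_left h1 hp0
      _ = β * p * α v := by ring
  set tF : Fin N := ⟨t, ht⟩ with htFdef
  have htF : (tF : ℕ) = t := rfl
  -- indicator nonnegativity helper
  have indnn : ∀ (P : Prop), (0:ℝ) ≤ (if P then 1 else 0) := fun P => by
    split_ifs <;> norm_num
  rw [gammaP, gammaP, sum_pair_split tF, sum_pair_split tF]
  refine Finset.sum_le_sum fun r _ => Finset.sum_le_sum fun s _ => ?_
  -- per-cell notation
  have hC0 : (0:ℝ) ≤ (∏ i : {j : Fin N // j ≠ tF},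
        (if ((i : Fin N) : ℕ) < t + 1 then (if r i then β * p else 1 - β * p)
          else (if r i then p else 1 - p))) * ∏ i : {j : Fin N // j ≠ tF}, α (s i) := by
    refine mul_nonneg (Finset.prod_nonneg fun i _ => ?_)
      (Finset.prod_nonneg fun i _ => (hα _).le)
    split_ifs <;> linarith
  -- facts about the event
  have hmono : ∀ (t' : ℕ) (v : Fin k),
      ProperHC n N k ε c t' (recomb tF false r) (recomb tF v s) →
      ProperHC n N k ε c t' (recomb tF true r) (recomb tF v s) := by
    intro t' v
    refine hc_mono fun j hj => ?_
    by_cases h : j = tF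
    · subst h; rw [recomb_same] at hj; exact absurd hj (by simp)
    · rw [recomb_ne _ _ _ h] at hj ⊢; exact hj
  have hcongr_t : ∀ (u : Bool) (v v' : Fin k),
      ProperHC n N k ε c t (recomb tF u r) (recomb tF v s) →
      ProperHC n N k ε c t (recomb tF u r) (recomb tF v' s) := by
    intro u v v'
    refine hc_congr fun j hj _ => ?_
    have hne : j ≠ tF := by rintro rfl; omega
    rw [recomb_ne _ _ _ hne, recomb_ne _ _ _ hne]
  have hcongr_b0 : ∀ (t' : ℕ) (v v' : Fin k),
      ProperHC n N k ε c t' (recomb tF false r) (recomb tF v s) →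
      ProperHC n N k ε c t' (recomb tF false r) (recomb tF v' s) := by
    intro t' v v'
    refine hc_congr fun j _ hbj => ?_
    have hne : j ≠ tF := by rintro rfl; rw [recomb_same] at hbj; simp at hbj
    rw [recomb_ne _ _ _ hne, recomb_ne _ _ _ hne]
  -- core inequality
  have key : (∑ v : Fin k, p * α v *
        (if ProperHC n N k ε c t (recomb tF true r) (recomb tF v s) then 1 else 0))
      + (∑ v : Fin k, (1 - p) * α v *
        (if ProperHC n N k ε c t (recomb tF false r) (recomb tF v s) then 1 else 0))
      ≤ (∑ v : Fin k, β * p * α v *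
        (if ProperHC n N k ε c (t+1) (recomb tF true r) (recomb tF v s) then 1 else 0))
      + (∑ v : Fin k, (1 - β * p) * α v *
        (if ProperHC n N k ε c (t+1) (recomb tF false r) (recomb tF v s) then 1 else 0)) := by
    have sumconst : ∀ (x : ℝ), (∑ v : Fin k, x * α v) = x := fun x => by
      rw [← Finset.mul_sum, hαsum, mul_one]
    by_cases h0 : ProperHC n N k ε c t (recomb tF false r) (recomb tF (⟨0, hk⟩ : Fin k) s)
    · have i1 : ∀ v, ProperHC n N k ε c t (recomb tF false r) (recomb tF v s) :=
        fun v => hcongr_t false _ v h0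
      have i2 : ∀ v, ProperHC n N k ε c t (recomb tF true r) (recomb tF v s) :=
        fun v => hmono t v (i1 v)
      have i3 : ∀ v, ProperHC n N k ε c (t+1) (recomb tF false r) (recomb tF v s) :=
        fun v => hc_step htF (recomb_same tF false r) (i1 v)
      have i4 : ∀ v, ProperHC n N k ε c (t+1) (recomb tF true r) (recomb tF v s) :=
        fun v => hmono (t+1) v (i3 v)
      have e1 : ∀ (x : ℝ) (t' : ℕ) (u : Bool),
          (∀ v, ProperHC n N k ε c t' (recomb tF u r) (recomb tF v s)) →
          (∑ v : Fin k, x * α v *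
            (if ProperHC n N k ε c t' (recomb tF u r) (recomb tF v s) then 1 else 0)) = x := by
        intro x t' u hall
        calc (∑ v : Fin k, x * α v *
              (if ProperHC n N k ε c t' (recomb tF u r) (recomb tF v s) then 1 else 0))
            = ∑ v : Fin k, x * α v :=
              Finset.sum_congr rfl fun v _ => by rw [if_pos (hall v), mul_one]
          _ = x := sumconst x
      rw [e1 p t true i2, e1 (1-p) t false i1, e1 (β*p) (t+1) true i4,
        e1 (1-β*p) (t+1) false i3]
      linarith
    · by_cases h1 : ProperHC n N k ε c t (recomb tF true r) (recomb tF (⟨0, hk⟩ : Fin k) s)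
      · have i2 : ∀ v, ProperHC n N k ε c t (recomb tF true r) (recomb tF v s) :=
          fun v => hcongr_t true _ v h1
        have i0 : ∀ v, ¬ ProperHC n N k ε c t (recomb tF false r) (recomb tF v s) :=
          fun v hv => h0 (hcongr_t false v _ hv)
        have hupd_b : Function.update (recomb tF true r) tF false = recomb tF false r := by
          funext j
          by_cases h : j = tF
          · subst h; rw [Function.update_self, recomb_same]
          · rw [Function.update_of_ne h, recomb_ne _ _ _ h, recomb_ne _ _ _ h]
        obtain ⟨i₀, hkey⟩ := hc_key hn htF h1 (by rw [hupd_b]; exact i0 _)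
        have hupd_f : Function.update (recomb tF (⟨0, hk⟩ : Fin k) s) tF (c i₀)
            = recomb tF (c i₀) s := by
          funext j
          by_cases h : j = tF
          · subst h; rw [Function.update_self, recomb_same]
          · rw [Function.update_of_ne h, recomb_ne _ _ _ h, recomb_ne _ _ _ h]
        rw [hupd_f] at hkey
        have e1 : (∑ v : Fin k, p * α v *
            (if ProperHC n N k ε c t (recomb tF true r) (recomb tF v s) then 1 else 0)) = p :=
          calc (∑ v : Fin k, p * α v *
              (if ProperHC n N k ε c t (recomb tF true r) (recomb tF v s) then 1 else 0))
              = ∑ v : Fin k, p * α v :=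
                Finset.sum_congr rfl fun v _ => by rw [if_pos (i2 v), mul_one]
            _ = p := sumconst p
        have e2 : (∑ v : Fin k, (1 - p) * α v *
            (if ProperHC n N k ε c t (recomb tF false r) (recomb tF v s) then 1 else 0)) = 0 :=
          Finset.sum_eq_zero fun v _ => by rw [if_neg (i0 v), mul_zero]
        rw [e1, e2, add_zero]
        have hterm : β * p * α (c i₀) ≤ ∑ v : Fin k, β * p * α v *
            (if ProperHC n N k ε c (t+1) (recomb tF true r) (recomb tF v s) then 1 else 0) := by
          have := Finset.single_le_sum (f := fun v => β * p * α v *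
              (if ProperHC n N k ε c (t+1) (recomb tF true r) (recomb tF v s) then 1 else 0))
            (fun v _ => mul_nonneg (mul_nonneg hbp (hα v).le) (indnn _))
            (Finset.mem_univ (c i₀))
          simp only [if_pos hkey, mul_one] at this
          exact this
        have h2nn : (0:ℝ) ≤ ∑ v : Fin k, (1 - β * p) * α v *
            (if ProperHC n N k ε c (t+1) (recomb tF false r) (recomb tF v s) then 1 else 0) :=
          Finset.sum_nonneg fun v _ => mul_nonneg (mul_nonneg h1bp (hα v).le) (indnn _)
        calc p ≤ β * p * α (c i₀) := hpβα _
          _ ≤ _ := hterm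
          _ ≤ _ := le_add_of_nonneg_right h2nn
      · have i2 : ∀ v, ¬ ProperHC n N k ε c t (recomb tF true r) (recomb tF v s) :=
          fun v hv => h1 (hcongr_t true v _ hv)
        have i0 : ∀ v, ¬ ProperHC n N k ε c t (recomb tF false r) (recomb tF v s) :=
          fun v hv => i2 v (hmono t v hv)
        have e1 : (∑ v : Fin k, p * α v *
            (if ProperHC n N k ε c t (recomb tF true r) (recomb tF v s) then 1 else 0)) = 0 :=
          Finset.sum_eq_zero fun v _ => by rw [if_neg (i2 v), mul_zero]
        have e2 : (∑ v : Fin k, (1 - p) * α v *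
            (if ProperHC n N k ε c t (recomb tF false r) (recomb tF v s) then 1 else 0)) = 0 :=
          Finset.sum_eq_zero fun v _ => by rw [if_neg (i0 v), mul_zero]
        rw [e1, e2, add_zero]
        refine add_nonneg (Finset.sum_nonneg fun v _ => ?_) (Finset.sum_nonneg fun v _ => ?_)
        · exact mul_nonneg (mul_nonneg hbp (hα v).le) (indnn _)
        · exact mul_nonneg (mul_nonneg h1bp (hα v).le) (indnn _)
  -- put the cell back together
  have elhs : (∑ u : Bool, ∑ v : Fin k,
        gammaWeight N k t p β α (recomb tF u r) (recomb tF v s) *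
          (if ProperHC n N k ε c t (recomb tF u r) (recomb tF v s) then 1 else 0))
      = ((∏ i : {j : Fin N // j ≠ tF},
            (if ((i : Fin N) : ℕ) < t + 1 then (if r i then β * p else 1 - β * p)
              else (if r i then p else 1 - p))) * ∏ i : {j : Fin N // j ≠ tF}, α (s i))
        * ((∑ v : Fin k, p * α v *
              (if ProperHC n N k ε c t (recomb tF true r) (recomb tF v s) then 1 else 0))
          + (∑ v : Fin k, (1 - p) * α v *
              (if ProperHC n N k ε c t (recomb tF false r) (recomb tF v s) then 1 else 0))) := by
    rw [Fintype.sum_bool, mul_add]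
    congr 1
    · rw [Finset.mul_sum]
      refine Finset.sum_congr rfl fun v _ => ?_
      rw [gammaWeight_recomb, restW_eq p β t tF htF r,
        if_neg (show ¬ (tF : ℕ) < t by omega), if_pos rfl]
      ring
    · rw [Finset.mul_sum]
      refine Finset.sum_congr rfl fun v _ => ?_
      rw [gammaWeight_recomb, restW_eq p β t tF htF r,
        if_neg (show ¬ (tF : ℕ) < t by omega), if_neg (by simp)]
      ring
  have erhs : (∑ u : Bool, ∑ v : Fin k,
        gammaWeight N k (t+1) p β α (recomb tF u r) (recomb tF v s) *
          (if ProperHC n N k ε c (t+1) (recomb tF u r) (recomb tF v s) then 1 else 0))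
      = ((∏ i : {j : Fin N // j ≠ tF},
            (if ((i : Fin N) : ℕ) < t + 1 then (if r i then β * p else 1 - β * p)
              else (if r i then p else 1 - p))) * ∏ i : {j : Fin N // j ≠ tF}, α (s i))
        * ((∑ v : Fin k, β * p * α v *
              (if ProperHC n N k ε c (t+1) (recomb tF true r) (recomb tF v s) then 1 else 0))
          + (∑ v : Fin k, (1 - β * p) * α v *
              (if ProperHC n N k ε c (t+1) (recomb tF false r) (recomb tF v s) then 1 else 0))) := by
    rw [Fintype.sum_bool, mul_add]
    congr 1
    · rw [Finset.mul_sum]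
      refine Finset.sum_congr rfl fun v _ => ?_
      rw [gammaWeight_recomb,
        if_pos (show (tF : ℕ) < t + 1 by omega), if_pos rfl]
      ring
    · rw [Finset.mul_sum]
      refine Finset.sum_congr rfl fun v _ => ?_
      rw [gammaWeight_recomb,
        if_pos (show (tF : ℕ) < t + 1 by omega), if_neg (by simp)]
      ring
  rw [elhs, erhs]
  exact mul_le_mul_of_nonneg_left key hC0
end
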